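/- arXiv:math/0608573 — 5 statements merged into one kernel-verified Lean document; each statement's English description precedes it below -/
import Mathlib

section
/- Let p be a prime, a ∈ ℚ_p with |a|_p > 1 such that √(|a|_p) is not an integer power of p, and f(x) = x³ + ax². If 1/|a|_p < |x|_p < 1, then there exists n such that |fⁿ(x)|_p > |a|_p, and hence |fᵏ(x)|_p → ∞ as k → ∞. -/
/-!
In an ultrametric field `‖y ^ 3 + a * y ^ 2‖ = max ‖y‖ ‖a‖ * ‖y‖ ^ 2` whenever `‖y‖ ≠ ‖a‖`.
On the annulus `1 < ‖a * y‖`, `‖y‖ < 1` each step of `f` therefore squares `‖a * y‖`, so the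
orbit leaves the annulus. It cannot land on the sphere `‖y‖ = 1`, as `‖a‖` is not the square of
a norm; if it lands in `1 < ‖y‖ < ‖a‖`, one more step carries it beyond `‖a‖`, where every step
cubes the norm.
-/

open Filter

section Cubic

variable {K : Type*} [NormedField K] {a : K} {f : K → K}

def innerAnnulus (a : K) : Set K := {y | 1 < ‖a * y‖ ∧ ‖y‖ < 1}

theorem one_lt_norm_of_mem_innerAnnulus {y : K} (hy : y ∈ innerAnnulus a) : 1 < ‖a‖ :=
  calc 1 < ‖a‖ * ‖y‖ := norm_mul a y ▸ hy.1
    _ ≤ ‖a‖ := mul_le_of_le_one_right (norm_nonneg a) hy.2.le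

theorem norm_mul_lt_norm_of_mem_innerAnnulus {y : K} (hy : y ∈ innerAnnulus a) :
    ‖a * y‖ < ‖a‖ := by
  rw [norm_mul]
  exact mul_lt_of_lt_one_right (by linarith [one_lt_norm_of_mem_innerAnnulus hy]) hy.2

variable [IsUltrametricDist K]

theorem norm_cubic_of_norm_ne {y : K} (h : ‖y‖ ≠ ‖a‖) :
    ‖y ^ 3 + a * y ^ 2‖ = max ‖y‖ ‖a‖ * ‖y‖ ^ 2 := by
  rw [show y ^ 3 + a * y ^ 2 = (y + a) * y ^ 2 by ring, norm_mul, norm_pow,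
    IsUltrametricDist.norm_add_eq_max_of_norm_ne_norm h]

theorem norm_mul_cubic_of_norm_lt {y : K} (h : ‖y‖ < ‖a‖) :
    ‖a * (y ^ 3 + a * y ^ 2)‖ = ‖a * y‖ ^ 2 := by
  rw [norm_mul, norm_cubic_of_norm_ne h.ne, max_eq_right h.le, norm_mul]
  ring

theorem norm_cubic_of_norm_lt {y : K} (h : ‖a‖ < ‖y‖) : ‖y ^ 3 + a * y ^ 2‖ = ‖y‖ ^ 3 := by
  rw [norm_cubic_of_norm_ne h.ne', max_eq_left h.le]
  ring

variable (hf : ∀ x, f x = x ^ 3 + a * x ^ 2)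
include hf

theorem norm_iterate_eq_pow_of_norm_lt {y : K} (hay : ‖a‖ < ‖y‖) (hy : 1 ≤ ‖y‖) (k : ℕ) :
    ‖f^[k] y‖ = ‖y‖ ^ 3 ^ k := by
  induction k with
  | zero => simp
  | succ k ih =>
    have hay' : ‖a‖ < ‖f^[k] y‖ :=
      ih ▸ hay.trans_le (le_self_pow₀ hy (pow_ne_zero k three_ne_zero))
    rw [Function.iterate_succ_apply', hf, norm_cubic_of_norm_lt hay', ih, ← pow_mul, pow_succ]

theorem tendsto_norm_iterate_of_norm_lt {y : K} (hay : ‖a‖ < ‖y‖) (hy : 1 < ‖y‖) :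
    Tendsto (fun k ↦ ‖f^[k] y‖) atTop atTop := by
  simp_rw [norm_iterate_eq_pow_of_norm_lt hf hay hy.le]
  exact (tendsto_pow_atTop_atTop_of_one_lt hy).comp
    (tendsto_pow_atTop_atTop_of_one_lt (by norm_num : 1 < 3))

theorem norm_mul_apply_of_mem_innerAnnulus {y : K} (hy : y ∈ innerAnnulus a) :
    ‖a * f y‖ = ‖a * y‖ ^ 2 :=
  hf y ▸ norm_mul_cubic_of_norm_lt (hy.2.trans (one_lt_norm_of_mem_innerAnnulus hy))

theorem mem_innerAnnulus_or_norm_lt_norm_iterate_two (hsq : ∀ z : K, ‖z‖ ^ 2 ≠ ‖a‖) {y : K}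
    (hy : y ∈ innerAnnulus a) : f y ∈ innerAnnulus a ∨ ‖a‖ < ‖f^[2] y‖ := by
  have ha := one_lt_norm_of_mem_innerAnnulus hy
  have hfy := norm_mul_apply_of_mem_innerAnnulus hf hy
  have hfy_ne : ‖f y‖ ≠ 1 := fun h ↦ hsq (a * y) (by rw [← hfy, norm_mul, h, mul_one])
  rcases hfy_ne.lt_or_gt with hlt | hgt
  · exact .inl ⟨hfy ▸ one_lt_pow₀ hy.1 two_ne_zero, hlt⟩
  · have hfy_lt : ‖f y‖ < ‖a‖ := by
      have hay := norm_mul_lt_norm_of_mem_innerAnnulus hy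
      rw [norm_mul] at hfy
      nlinarith [norm_nonneg (a * y)]
    have hffy : ‖f^[2] y‖ = ‖a‖ * ‖f y‖ ^ 2 := by
      rw [Function.iterate_succ_apply', Function.iterate_one, hf (f y),
        norm_cubic_of_norm_ne hfy_lt.ne, max_eq_right hfy_lt.le]
    exact .inr (hffy ▸ lt_mul_of_one_lt_right (by positivity) (one_lt_pow₀ hgt two_ne_zero))

theorem exists_norm_lt_norm_iterate_of_mem_innerAnnulus (hsq : ∀ z : K, ‖z‖ ^ 2 ≠ ‖a‖)
    {y : K} (hy : y ∈ innerAnnulus a) : ∃ n, ‖a‖ < ‖f^[n] y‖ := by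
  by_contra! hbdd
  have hmem : ∀ k, f^[k] y ∈ innerAnnulus a := by
    intro k
    induction k with
    | zero => exact hy
    | succ k ih =>
      rw [Function.iterate_succ_apply']
      refine (mem_innerAnnulus_or_norm_lt_norm_iterate_two hf hsq ih).resolve_right ?_
      rw [← Function.iterate_add_apply]
      exact (hbdd _).not_gt
  have hnorm : ∀ k, ‖a * f^[k] y‖ = ‖a * y‖ ^ 2 ^ k := by
    intro k
    induction k with
    | zero => simp
    | succ k ih =>
      rw [Function.iterate_succ_apply', norm_mul_apply_of_mem_innerAnnulus hf (hmem k), ih,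
        ← pow_mul, pow_succ]
  obtain ⟨k, hk⟩ := ((tendsto_pow_atTop_atTop_of_one_lt hy.1).comp
    (tendsto_pow_atTop_atTop_of_one_lt one_lt_two)).eventually_ge_atTop ‖a‖ |>.exists
  have := norm_mul_lt_norm_of_mem_innerAnnulus (hmem k)
  simp only [Function.comp_apply, ← hnorm] at hk
  linarith

end Cubic

theorem Padic.norm_sq_ne_of_sqrt_ne_zpow {p : ℕ} [Fact p.Prime] {a : ℚ_[p]} (ha : a ≠ 0)
    (hsqrt : ∀ k : ℤ, √‖a‖ ≠ (p : ℝ) ^ k) (z : ℚ_[p]) : ‖z‖ ^ 2 ≠ ‖a‖ := by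
  intro h
  have hz : z ≠ 0 := by
    rintro rfl
    exact ha (norm_eq_zero.mp (by simpa using h.symm))
  exact hsqrt (-z.valuation) <| by
    rw [← h, Real.sqrt_sq (norm_nonneg z), Padic.norm_eq_zpow_neg_valuation hz]

theorem inner_annulus_escape (p : ℕ) [Fact p.Prime] (a : ℚ_[p]) (ha : 1 < ‖a‖)
    (hsqrt : ∀ k : ℤ, Real.sqrt ‖a‖ ≠ (p : ℝ) ^ k)
    (f : ℚ_[p] → ℚ_[p]) (hf : ∀ x, f x = x ^ 3 + a * x ^ 2)
    (x : ℚ_[p]) (hx1 : 1 / ‖a‖ < ‖x‖) (hx2 : ‖x‖ < 1) :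
    (∃ n : ℕ, ‖a‖ < ‖f^[n] x‖) ∧
      Filter.Tendsto (fun k => ‖f^[k] x‖) Filter.atTop Filter.atTop := by
  have ha0 : 0 < ‖a‖ := one_pos.trans ha
  have hx : x ∈ innerAnnulus a := ⟨by rwa [norm_mul, ← div_lt_iff₀' ha0], hx2⟩
  obtain ⟨n, hn⟩ := exists_norm_lt_norm_iterate_of_mem_innerAnnulus hf
    (Padic.norm_sq_ne_of_sqrt_ne_zpow (norm_pos_iff.mp ha0) hsqrt) hx
  refine ⟨⟨n, hn⟩, ?_⟩
  rw [← tendsto_add_atTop_iff_nat n]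
  simp_rw [Function.iterate_add_apply]
  exact tendsto_norm_iterate_of_norm_lt hf hn (ha.trans hn)
end

section
/- Let p be a prime, a ∈ ℚ_p with |a|_p > 1, and f(x) = x³ + ax². If |x|_p = |a|_p, then |f(x)|_p = |a|_p²·|x + a|_p. In particular, if |x + a|_p < 1/|a|_p³ then |f(x)|_p < 1/|a|_p, so fⁿ(x) → 0. -/
/-!
Factor `f x = x² (x + a)`: on the sphere `‖x‖ = ‖a‖` this gives the norm identity, and a point
with `‖x + a‖ < ‖a‖⁻³` lands in the ball `‖y‖ < ‖a‖⁻¹`. There the ultrametric inequality gives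
`‖f z‖ ≤ ‖a‖ ‖z‖² ≤ (‖a‖ ‖y‖) ‖z‖` for `‖z‖ ≤ ‖y‖`, so `f` contracts by the factor `‖a‖ ‖y‖ < 1`
and its iterates converge to `0`.
-/

open Filter Topology

section Contraction

variable {E : Type*} [SeminormedAddGroup E] {g : E → E} {r c : ℝ}

theorem norm_iterate_le_pow_mul (hc0 : 0 ≤ c) (hc1 : c ≤ 1)
    (hg : ∀ z, ‖z‖ ≤ r → ‖g z‖ ≤ c * ‖z‖) {y : E} (hy : ‖y‖ ≤ r) (n : ℕ) :
    ‖g^[n] y‖ ≤ c ^ n * ‖y‖ := by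
  induction n with
  | zero => simp
  | succ n ih =>
    have hle : ‖g^[n] y‖ ≤ r :=
      ih.trans <| (mul_le_of_le_one_left (norm_nonneg y) (pow_le_one₀ hc0 hc1)).trans hy
    calc ‖g^[n + 1] y‖ = ‖g (g^[n] y)‖ := by rw [Function.iterate_succ_apply']
      _ ≤ c * ‖g^[n] y‖ := hg _ hle
      _ ≤ c * (c ^ n * ‖y‖) := mul_le_mul_of_nonneg_left ih hc0
      _ = c ^ (n + 1) * ‖y‖ := by ring

theorem tendsto_iterate_zero_of_norm_le_mul (hc0 : 0 ≤ c) (hc1 : c < 1)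
    (hg : ∀ z, ‖z‖ ≤ r → ‖g z‖ ≤ c * ‖z‖) {y : E} (hy : ‖y‖ ≤ r) :
    Tendsto (fun n => g^[n] y) atTop (𝓝 0) := by
  rw [tendsto_zero_iff_norm_tendsto_zero]
  refine squeeze_zero (fun n => norm_nonneg _) (norm_iterate_le_pow_mul hc0 hc1.le hg hy) ?_
  simpa using (tendsto_pow_atTop_nhds_zero_of_lt_one hc0 hc1).mul_const ‖y‖

end Contraction

section CubicMap

variable {K : Type*} [NormedField K]

theorem norm_cube_add_mul_sq (a x : K) : ‖x ^ 3 + a * x ^ 2‖ = ‖x‖ ^ 2 * ‖x + a‖ := by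
  rw [show x ^ 3 + a * x ^ 2 = x ^ 2 * (x + a) by ring, norm_mul, norm_pow]

variable [IsUltrametricDist K]

theorem norm_cube_add_mul_sq_le {a z : K} (ha : 1 ≤ ‖a‖) (hz : ‖z‖ ≤ 1) :
    ‖z ^ 3 + a * z ^ 2‖ ≤ ‖a‖ * ‖z‖ ^ 2 := by
  rw [norm_cube_add_mul_sq, mul_comm]
  gcongr
  exact (IsUltrametricDist.norm_add_le_max z a).trans (max_le (hz.trans ha) le_rfl)

theorem tendsto_iterate_cube_add_mul_sq {a y : K} (ha : 1 ≤ ‖a‖) (hy : ‖a‖ * ‖y‖ < 1) :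
    Tendsto (fun n => (fun z => z ^ 3 + a * z ^ 2)^[n] y) atTop (𝓝 0) := by
  have hy1 : ‖y‖ ≤ 1 := (le_mul_of_one_le_left (norm_nonneg y) ha).trans hy.le
  refine tendsto_iterate_zero_of_norm_le_mul (by positivity) hy (r := ‖y‖) (fun z hz => ?_) le_rfl
  calc ‖z ^ 3 + a * z ^ 2‖ ≤ ‖a‖ * ‖z‖ ^ 2 := norm_cube_add_mul_sq_le ha (hz.trans hy1)
    _ = ‖a‖ * ‖z‖ * ‖z‖ := by ring
    _ ≤ ‖a‖ * ‖y‖ * ‖z‖ := by gcongr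

end CubicMap

theorem sphere_a_image (p : ℕ) [Fact p.Prime] (a : ℚ_[p]) (ha : 1 < ‖a‖)
    (f : ℚ_[p] → ℚ_[p]) (hf : ∀ x, f x = x ^ 3 + a * x ^ 2)
    (x : ℚ_[p]) (hx : ‖x‖ = ‖a‖) :
    ‖f x‖ = ‖a‖ ^ 2 * ‖x + a‖ ∧
      (‖x + a‖ < 1 / ‖a‖ ^ 3 → ‖f x‖ < 1 / ‖a‖ ∧
        Filter.Tendsto (fun n => f^[n] x) Filter.atTop (nhds 0)) := by
  obtain rfl : f = fun z => z ^ 3 + a * z ^ 2 := funext hf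
  have ha0 : 0 < ‖a‖ := one_pos.trans ha
  have himage : ‖x ^ 3 + a * x ^ 2‖ = ‖a‖ ^ 2 * ‖x + a‖ := by rw [norm_cube_add_mul_sq, hx]
  refine ⟨himage, fun hlt => ?_⟩
  have hsmall : ‖x ^ 3 + a * x ^ 2‖ < 1 / ‖a‖ := by
    calc ‖x ^ 3 + a * x ^ 2‖ = ‖a‖ ^ 2 * ‖x + a‖ := himage
      _ < ‖a‖ ^ 2 * (1 / ‖a‖ ^ 3) := by gcongr
      _ = 1 / ‖a‖ := by field_simp
  refine ⟨hsmall, ?_⟩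
  rw [← tendsto_add_atTop_iff_nat 1]
  simp only [Function.iterate_succ_apply]
  exact tendsto_iterate_cube_add_mul_sq ha.le (by rwa [lt_div_iff₀ ha0, mul_comm] at hsmall)
end

section
/- Let a ∈ ℚ_3 with |a|_3 < 1, and let x₀ ∈ ℚ_3 be a root of x² + ax - 1 = 0. Then |f'(x₀)|_3 < 1, so x₀ is an attracting fixed point of f(x) = x³ + ax². -/
theorem attracting_three_adic (a x₀ : ℚ_[3]) (ha : ‖a‖ < 1)
    (hx : x₀ ^ 2 + a * x₀ - 1 = 0) :
    ‖3 * x₀ ^ 2 + 2 * a * x₀‖ < 1 := by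
  have hx' : x₀ ^ 2 = 1 - a * x₀ := by linear_combination hx
  have hx0 : ‖x₀‖ ≤ 1 := by
    by_contra h
    push_neg at h
    have h1 : ‖x₀ ^ 2‖ = ‖x₀‖ ^ 2 := norm_pow _ _
    have h2 : ‖(1 : ℚ_[3]) - a * x₀‖ ≤ max ‖(1:ℚ_[3])‖ ‖a * x₀‖ := by
      have := Padic.nonarchimedean (1:ℚ_[3]) (-(a*x₀))
      simpa [sub_eq_add_neg] using this
    rw [hx'] at h1
    rw [norm_one, norm_mul] at h2
    have hax : ‖a‖ * ‖x₀‖ < ‖x₀‖ ^ 2 := by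
      nlinarith [norm_nonneg a, norm_nonneg x₀]
    have : ‖x₀‖ ^ 2 ≤ max 1 (‖a‖ * ‖x₀‖) := h1 ▸ h2
    rcases max_cases 1 (‖a‖ * ‖x₀‖) with ⟨he, _⟩ | ⟨he, _⟩ <;> rw [he] at this <;> nlinarith
  have key : 3 * x₀ ^ 2 + 2 * a * x₀ = 3 + (-(a * x₀)) := by
    rw [hx']; ring
  rw [key]
  have h3 : ‖(3:ℚ_[3])‖ < 1 := by
    have := Padic.norm_p (p := 3)
    push_cast at this
    rw [this]; norm_num
  have hax : ‖-(a * x₀)‖ < 1 := by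
    rw [norm_neg, norm_mul]
    calc ‖a‖ * ‖x₀‖ ≤ ‖a‖ * 1 := by
          exact mul_le_mul_of_nonneg_left hx0 (norm_nonneg a)
      _ < 1 := by simpa using ha
  calc ‖(3:ℚ_[3]) + -(a * x₀)‖ ≤ max ‖(3:ℚ_[3])‖ ‖-(a * x₀)‖ :=
        Padic.nonarchimedean _ _
    _ < 1 := max_lt h3 hax
end

section
/- Let p be a prime with p ≠ 3, a ∈ ℚ_p with |a|_p < 1, f(x) = x³ + ax², and x₀ a root of x² + ax - 1 = 0 with |x₀|_p = 1. For x with |x - x₀|_p > 1, one has |f(x) - x₀|_p = |x - x₀|_p³. Hence every Siegel disc centered at x₀ is contained in the closed unit ball around x₀. -/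
theorem siegel_disc_bound (p : ℕ) [Fact p.Prime] (hp : p ≠ 3) (a x₀ : ℚ_[p])
    (ha : ‖a‖ < 1) (hx : x₀ ^ 2 + a * x₀ - 1 = 0) (hnorm : ‖x₀‖ = 1)
    (f : ℚ_[p] → ℚ_[p]) (hf : ∀ x, f x = x ^ 3 + a * x ^ 2) :
    (∀ x : ℚ_[p], 1 < ‖x - x₀‖ → ‖f x - x₀‖ = ‖x - x₀‖ ^ 3) ∧
    (∀ r : ℝ, 0 < r →
      (∀ ρ : ℝ, ρ < r → ∀ x : ℚ_[p], ‖x - x₀‖ = ρ → ∀ n : ℕ, ‖f^[n] x - x₀‖ = ρ) →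
      Metric.ball x₀ r ⊆ Metric.closedBall x₀ 1) := by
  have h3 : ‖(3 : ℚ_[p])‖ ≤ 1 := by
    exact_mod_cast Padic.norm_int_le_one (3 : ℤ)
  have key : ∀ x : ℚ_[p], 1 < ‖x - x₀‖ → ‖f x - x₀‖ = ‖x - x₀‖ ^ 3 := by
    intro x hγ
    set γ := x - x₀ with hγdef
    have heq : f x - x₀ = γ * (γ ^ 2 + ((3 * x₀ + a) * γ + (3 * x₀ ^ 2 + 2 * a * x₀))) := by
      rw [hf]
      linear_combination x₀ * hx
    have hγpos : (0:ℝ) < ‖γ‖ := lt_trans one_pos hγ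
    have hb1 : ‖(3 * x₀ + a) * γ‖ ≤ ‖γ‖ := by
      rw [norm_mul]
      have : ‖3 * x₀ + a‖ ≤ 1 := by
        refine le_trans (Padic.nonarchimedean _ _) (max_le ?_ ha.le)
        rw [norm_mul, hnorm, mul_one]; exact h3
      nlinarith
    have hb2 : ‖3 * x₀ ^ 2 + 2 * a * x₀‖ ≤ 1 := by
      refine le_trans (Padic.nonarchimedean _ _) (max_le ?_ ?_)
      · rw [norm_mul, norm_pow, hnorm, one_pow, mul_one]; exact h3
      · rw [norm_mul, norm_mul, hnorm, mul_one]
        calc ‖(2:ℚ_[p])‖ * ‖a‖ ≤ 1 * 1 := by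
              refine mul_le_mul ?_ ha.le (norm_nonneg _) one_pos.le
              exact_mod_cast Padic.norm_int_le_one (2 : ℤ)
          _ = 1 := one_mul 1
    have hrest : ‖(3 * x₀ + a) * γ + (3 * x₀ ^ 2 + 2 * a * x₀)‖ < ‖γ ^ 2‖ := by
      refine lt_of_le_of_lt (Padic.nonarchimedean _ _) ?_
      rw [norm_pow]
      refine max_lt ?_ ?_
      · refine lt_of_le_of_lt hb1 ?_; nlinarith
      · refine lt_of_le_of_lt hb2 ?_; nlinarith
    have hsum : ‖γ ^ 2 + ((3 * x₀ + a) * γ + (3 * x₀ ^ 2 + 2 * a * x₀))‖ = ‖γ ^ 2‖ := by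
      rw [add_comm, Padic.add_eq_max_of_ne (ne_of_lt hrest)]
      exact max_eq_right hrest.le
    rw [heq, norm_mul, hsum, norm_pow]
    ring
  refine ⟨key, ?_⟩
  intro r hr hsiegel x hxball
  rw [Metric.mem_ball, dist_eq_norm] at hxball
  rw [Metric.mem_closedBall, dist_eq_norm]
  by_contra h
  push_neg at h
  have h1 := hsiegel ‖x - x₀‖ hxball x rfl 1
  rw [Function.iterate_one] at h1
  have h2 := key x h
  rw [h1] at h2
  nlinarith [h, h2, mul_lt_mul_of_pos_left h (lt_trans one_pos h)]
end

section
/- Let p be a prime with p ≥ 5, a ∈ ℚ_p with |a|_p < 1, f(x) = x³ + ax², and x₀ a root of x² + ax - 1 = 0. The closed unit sphere S₁(x₀) = {x : |x - x₀|_p = 1} satisfies f(S₁(x₀)) ⊆ S₁(x₀) if and only if -3 has no square root in ℚ_p. -/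
/-!
The root `x₀` is a fixed point of `f`, and `f (x₀ + γ) - x₀ = γ Q(γ)` for a monic quadratic `Q`
whose coefficients are integral and whose constant term `3 - a x₀` is a unit (`p ≠ 3`). On the unit
sphere `|Q(γ)| ≤ 1`, so invariance fails iff `|Q(γ)| < 1` for some unit `γ`. Completing the square,
`(2γ + 3x₀ + a)² + 3 = 4 Q(γ) + a (x₀ + a)` with `|a (x₀ + a)| < 1`; since units congruent modulo
`p` differ by a square factor (Hensel, `p ≠ 2`), such a `γ` exists iff `-3` is a square, and then
`Q` even has a root, which is automatically a unit.
-/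

open Polynomial IsUltrametricDist

section UltrametricNorm

lemma norm_add_eq_of_norm_lt {S : Type*} [SeminormedAddGroup S] [IsUltrametricDist S] {x y : S}
    (h : ‖y‖ < ‖x‖) : ‖x + y‖ = ‖x‖ := by
  rw [norm_add_eq_max_of_norm_ne_norm h.ne', max_eq_left h.le]

variable {K : Type*} [NormedField K] [IsUltrametricDist K]

lemma norm_add_le_one {x y : K} (hx : ‖x‖ ≤ 1) (hy : ‖y‖ ≤ 1) : ‖x + y‖ ≤ 1 :=
  (norm_add_le_max x y).trans (max_le hx hy)

lemma norm_eq_one_of_norm_mul_add_eq_one {x b : K} (hb : ‖b‖ ≤ 1) (h : ‖x * (x + b)‖ = 1) :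
    ‖x‖ = 1 := by
  rw [norm_mul] at h
  rcases le_or_gt ‖x‖ 1 with hx | hx
  · nlinarith [norm_nonneg x, norm_add_le_one hx hb]
  · rw [norm_add_eq_of_norm_lt (hb.trans_lt hx)] at h
    nlinarith

end UltrametricNorm

namespace Padic

variable {p : ℕ} [Fact p.Prime]

theorem isSquare_of_norm_sub_one_lt (hp : p ≠ 2) {u : ℚ_[p]} (hu : ‖u - 1‖ < 1) : IsSquare u := by
  have hu1 : ‖u‖ ≤ 1 := by simpa using norm_add_le_one hu.le norm_one.le
  obtain ⟨U, rfl⟩ : ∃ U : ℤ_[p], (U : ℚ_[p]) = u := ⟨⟨u, hu1⟩, rfl⟩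
  have h2 : ‖(2 : ℤ_[p])‖ = 1 := by
    exact_mod_cast PadicInt.norm_natCast_eq_one_iff.mpr
      ((Nat.coprime_primes Fact.out Nat.prime_two).mpr hp)
  obtain ⟨z, hz, -⟩ := hensels_lemma (p := p) (F := X ^ 2 - C U) (a := 1) (by
    rw [← norm_neg]
    simpa [one_add_one_eq_two, h2, PadicInt.norm_def] using hu)
  simp only [aeval_sub, aeval_X_pow, aeval_C, Algebra.algebraMap_self, RingHom.id_apply,
    sub_eq_zero] at hz
  exact ⟨z, by rw [← PadicInt.coe_mul, ← sq, hz]⟩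

theorem isSquare_iff_of_norm_sub_lt (hp : p ≠ 2) {u v : ℚ_[p]} (hv : ‖v‖ = 1)
    (huv : ‖u - v‖ < 1) : IsSquare u ↔ IsSquare v := by
  have hu : ‖u‖ = 1 := by
    simpa [hv] using norm_add_eq_of_norm_lt (x := v) (y := u - v) (by rwa [hv])
  have hv0 : v ≠ 0 := norm_ne_zero_iff.mp (by rw [hv]; exact one_ne_zero)
  have hu0 : u ≠ 0 := norm_ne_zero_iff.mp (by rw [hu]; exact one_ne_zero)
  have hquot : IsSquare (u / v) := isSquare_of_norm_sub_one_lt hp (by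
    rwa [div_sub_one hv0, norm_div, hv, div_one])
  constructor
  · intro hsq
    simpa [hu0] using hsq.div hquot
  · intro hsq
    have := hsq.mul hquot
    rwa [mul_div_cancel₀ u hv0] at this

end Padic

/-- The paper's `γ² + 3x₀γ + 3 + a(γ - x₀)`, i.e. `(f (x₀ + γ) - x₀) / γ`. -/
def cofactor {R : Type*} [CommRing R] (a x₀ γ : R) : R :=
  γ * (γ + (3 * x₀ + a)) + (3 - a * x₀)

section CommRing

variable {R : Type*} [CommRing R] {a x₀ : R}

lemma cube_add_mul_sq_sub_eq (hx : x₀ ^ 2 + a * x₀ - 1 = 0) (x : R) :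
    x ^ 3 + a * x ^ 2 - x₀ = (x - x₀) * cofactor a x₀ (x - x₀) := by
  unfold cofactor
  linear_combination (3 * x - 2 * x₀) * hx

lemma sq_two_mul_add_add_three (hx : x₀ ^ 2 + a * x₀ - 1 = 0) (γ : R) :
    (2 * γ + (3 * x₀ + a)) ^ 2 + 3 = 4 * cofactor a x₀ γ + a * (x₀ + a) := by
  unfold cofactor
  linear_combination 9 * hx

end CommRing

section Ultrametric

variable {K : Type*} [NormedField K] [IsUltrametricDist K] {a x₀ : K}

lemma norm_eq_one_of_sq_add_mul_sub_one_eq_zero (ha : ‖a‖ ≤ 1) (hx : x₀ ^ 2 + a * x₀ - 1 = 0) :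
    ‖x₀‖ = 1 :=
  norm_eq_one_of_norm_mul_add_eq_one ha (by rw [show x₀ * (x₀ + a) = 1 by linear_combination hx,
    norm_one])

lemma norm_three_mul_add_le_one (ha : ‖a‖ ≤ 1) (hx₀ : ‖x₀‖ ≤ 1) : ‖3 * x₀ + a‖ ≤ 1 := by
  refine norm_add_le_one ?_ ha
  rw [norm_mul]
  exact mul_le_one₀ (by exact_mod_cast norm_natCast_le_one K 3) (norm_nonneg x₀) hx₀

lemma norm_three_sub_mul_eq_one (h3 : ‖(3 : K)‖ = 1) (ha : ‖a‖ < 1) (hx₀ : ‖x₀‖ = 1) :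
    ‖3 - a * x₀‖ = 1 := by
  rw [sub_eq_add_neg, ← h3]
  exact norm_add_eq_of_norm_lt (by rwa [norm_neg, norm_mul, hx₀, mul_one, h3])

lemma norm_cofactor_le_one (h3 : ‖(3 : K)‖ = 1) (ha : ‖a‖ < 1) (hx : x₀ ^ 2 + a * x₀ - 1 = 0)
    {γ : K} (hγ : ‖γ‖ ≤ 1) : ‖cofactor a x₀ γ‖ ≤ 1 := by
  have hx₀ := norm_eq_one_of_sq_add_mul_sub_one_eq_zero ha.le hx
  refine norm_add_le_one ?_ (norm_three_sub_mul_eq_one h3 ha hx₀).le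
  rw [norm_mul]
  exact mul_le_one₀ hγ (norm_nonneg _)
    (norm_add_le_one hγ (norm_three_mul_add_le_one ha.le hx₀.le))

lemma norm_eq_one_of_cofactor_eq_zero (h3 : ‖(3 : K)‖ = 1) (ha : ‖a‖ < 1)
    (hx : x₀ ^ 2 + a * x₀ - 1 = 0) {γ : K} (hγ : cofactor a x₀ γ = 0) : ‖γ‖ = 1 := by
  have hx₀ := norm_eq_one_of_sq_add_mul_sub_one_eq_zero ha.le hx
  refine norm_eq_one_of_norm_mul_add_eq_one (norm_three_mul_add_le_one ha.le hx₀.le) ?_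
  rw [eq_neg_of_add_eq_zero_left hγ, norm_neg, norm_three_sub_mul_eq_one h3 ha hx₀]

lemma norm_mul_add_lt_one (ha : ‖a‖ < 1) (hx : x₀ ^ 2 + a * x₀ - 1 = 0) : ‖a * (x₀ + a)‖ < 1 := by
  have hx₀ := norm_eq_one_of_sq_add_mul_sub_one_eq_zero ha.le hx
  rwa [norm_mul, norm_add_eq_of_norm_lt (by rwa [hx₀]), hx₀, mul_one]

end Ultrametric

section Padic

variable {p : ℕ} [Fact p.Prime] {a x₀ : ℚ_[p]}

lemma exists_cofactor_eq_zero (hp : p ≠ 2) (h3 : ‖(3 : ℚ_[p])‖ = 1) (ha : ‖a‖ < 1)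
    (hx : x₀ ^ 2 + a * x₀ - 1 = 0) (h : IsSquare (-3 : ℚ_[p])) : ∃ γ, cofactor a x₀ γ = 0 := by
  obtain ⟨s, hs⟩ : IsSquare (-3 + a * (x₀ + a)) :=
    (Padic.isSquare_iff_of_norm_sub_lt hp (by rwa [norm_neg]) (by
      simpa using norm_mul_add_lt_one ha hx)).mpr h
  refine ⟨(s - (3 * x₀ + a)) / 2, ?_⟩
  have := sq_two_mul_add_add_three hx ((s - (3 * x₀ + a)) / 2)
  linear_combination -(this + hs) / 4

lemma isSquare_neg_three_of_norm_cofactor_lt_one (hp : p ≠ 2) (h3 : ‖(3 : ℚ_[p])‖ = 1)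
    (ha : ‖a‖ < 1) (hx : x₀ ^ 2 + a * x₀ - 1 = 0) {γ : ℚ_[p]} (hγ : ‖cofactor a x₀ γ‖ < 1) :
    IsSquare (-3 : ℚ_[p]) := by
  refine (Padic.isSquare_iff_of_norm_sub_lt hp (by rwa [norm_neg]) ?_).mp
    (IsSquare.sq (2 * γ + (3 * x₀ + a)))
  rw [sub_neg_eq_add, sq_two_mul_add_add_three hx]
  refine (norm_add_le_max _ _).trans_lt (max_lt ?_ (norm_mul_add_lt_one ha hx))
  rw [norm_mul]
  have h4 : ‖(4 : ℚ_[p])‖ ≤ 1 := by exact_mod_cast norm_natCast_le_one ℚ_[p] 4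
  exact (mul_le_of_le_one_left (norm_nonneg _) h4).trans_lt hγ

end Padic

theorem sphere_invariance_iff (p : ℕ) [Fact p.Prime] (hp : 5 ≤ p) (a x₀ : ℚ_[p])
    (ha : ‖a‖ < 1) (hx : x₀ ^ 2 + a * x₀ - 1 = 0)
    (f : ℚ_[p] → ℚ_[p]) (hf : ∀ x, f x = x ^ 3 + a * x ^ 2) :
    (∀ x : ℚ_[p], ‖x - x₀‖ = 1 → ‖f x - x₀‖ = 1) ↔
      ¬∃ z : ℚ_[p], z ^ 2 = -3 := by
  have hp2 : p ≠ 2 := by omega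
  have h3 : ‖(3 : ℚ_[p])‖ = 1 := by
    exact_mod_cast Padic.norm_natCast_eq_one_iff.mpr
      ((Nat.coprime_primes Fact.out Nat.prime_three).mpr (by omega))
  have hfactor (x : ℚ_[p]) : f x - x₀ = (x - x₀) * cofactor a x₀ (x - x₀) := by
    rw [hf]
    exact cube_add_mul_sq_sub_eq hx x
  have hsq : (∃ z : ℚ_[p], z ^ 2 = -3) ↔ IsSquare (-3 : ℚ_[p]) := by
    simp only [isSquare_iff_exists_sq, eq_comm]
  rw [hsq]
  constructor
  · intro hinv hsq3
    obtain ⟨γ, hγ⟩ := exists_cofactor_eq_zero hp2 h3 ha hx hsq3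
    have hγ₁ : ‖x₀ + γ - x₀‖ = 1 := by
      rw [add_sub_cancel_left]
      exact norm_eq_one_of_cofactor_eq_zero h3 ha hx hγ
    simpa [hfactor, hγ] using hinv (x₀ + γ) hγ₁
  · intro hnsq x hxn
    rw [hfactor, norm_mul, hxn, one_mul]
    refine (norm_cofactor_le_one h3 ha hx hxn.le).antisymm (not_lt.mp fun hlt => hnsq ?_)
    exact isSquare_neg_three_of_norm_cofactor_lt_one hp2 h3 ha hx hlt
end
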